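/- Let f : X → ℝ be Lipschitz with constant C for the metric d_θ. If p ∈ X and x is the periodic point obtained by infinitely repeating the first N symbols of p, and the first j symbols of σ^N(p) agree with the first j symbols of p, then |Σ_{i=0}^{N−1} f(σ^i p) − Σ_{i=0}^{N−1} f(σ^i x)| ≤ C θ^j · θ/(1−θ). -/

import Mathlib

open MeasureTheory Filter Real Topology
open scoped ENNReal

noncomputable section

abbrev X (d : ℕ) : Type := ℕ → Fin d

def shift {d : ℕ} (x : X d) : X d := fun n => x (n + 1)

def birkhoff {d : ℕ} (f : X d → ℝ) (n : ℕ) (x : X d) : ℝ :=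
  ∑ i ∈ Finset.range n, f (shift^[i] x)

def IsPeriodic {d : ℕ} (x : X d) : Prop := ∃ n, 0 < n ∧ shift^[n] x = x

def minPer {d : ℕ} (x : X d) : ℕ := Function.minimalPeriod shift x

def beta {d : ℕ} (f : X d → ℝ) : ℝ :=
  sSup {r : ℝ | ∃ μ : Measure (X d), IsProbabilityMeasure μ ∧ μ.map shift = μ ∧ r = ∫ x, f x ∂μ}

def Ifun {d : ℕ} (f : X d → ℝ) (x : X d) : ℝ :=
  (minPer x : ℝ) * beta f - birkhoff f (minPer x) x

def dtheta {d : ℕ} (θ : ℝ) (x y : X d) : ℝ :=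
  letI : Decidable (x = y) := Classical.dec _
  if h : x = y then 0 else θ ^ Nat.find (Function.ne_iff.mp h)

def LipWrt {d : ℕ} (θ C : ℝ) (f : X d → ℝ) : Prop :=
  ∀ x y, |f x - f y| ≤ C * dtheta θ x y

def periodize {d : ℕ} (n : ℕ) (w : Fin (n + 1) → Fin d) : X d :=
  fun i => w ⟨i % (n + 1), Nat.mod_lt i (Nat.succ_pos n)⟩

def pressure {d : ℕ} (g : X d → ℝ) : ℝ :=
  Filter.limsup (fun n : ℕ =>
    Real.log (∑ w : Fin (n + 1) → Fin d, Real.exp (birkhoff g (n + 1) (periodize n w))) / ((n : ℝ) + 1))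
    Filter.atTop

def zetaVal {d : ℕ} (f : X d → ℝ) (c s : ℝ) (k : X d → ℝ) : ℝ :=
  ∑' n : ℕ, ∑ w : Fin (n + 1) → Fin d,
    Real.exp (c * s * birkhoff f (n + 1) (periodize n w) - ((n : ℝ) + 1) * pressure (fun y => c * f y))
      * (birkhoff k (n + 1) (periodize n w) / ((n : ℝ) + 1))

def etaVal {d : ℕ} (f : X d → ℝ) (c : ℝ) (N : ℕ) (k : X d → ℝ) : ℝ :=
  ∑ n ∈ Finset.range N, ∑ w : Fin (n + 1) → Fin d,
    Real.exp (c * birkhoff f (n + 1) (periodize n w)) * (birkhoff k (n + 1) (periodize n w) / ((n : ℝ) + 1))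

def piVal {d : ℕ} (f : X d → ℝ) (c : ℝ) (N : ℕ) (k : X d → ℝ) : ℝ :=
  ∑ n ∈ Finset.range N, ∑ w : Fin (n + 1) → Fin d,
    Real.exp (c * birkhoff f (n + 1) (periodize n w) - ((n : ℝ) + 1) * pressure (fun y => c * f y))
      * (birkhoff k (n + 1) (periodize n w) / ((n : ℝ) + 1))

def cylSet {d : ℕ} (m : ℕ) (w : Fin m → Fin d) : Set (X d) :=
  {x : X d | ∀ i : Fin m, x i = w i}

def Itilde {d : ℕ} (θ : ℝ) (f : X d → ℝ) (x : X d) : EReal :=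
  ⨆ ε : {e : ℝ // 0 < e},
    sInf {r : EReal | ∃ y : X d, IsPeriodic y ∧ dtheta θ x y ≤ ε.1 ∧ r = ((Ifun f y : ℝ) : EReal)}

def orbitMeasure {d : ℕ} (x : X d) : Measure (X d) :=
  ((minPer x : ℝ≥0∞))⁻¹ • ∑ i ∈ Finset.range (minPer x), Measure.dirac (shift^[i] x)

/-! Since `p` agrees with `x = p (· % N)` on its first `N + j` symbols, `σ^i p` and `σ^i x` agree
on their first `N - i + j` symbols, so the `i`-th terms of the two Birkhoff sums differ by at most
`C θ^j θ^(N - i)`; summing over `i < N` gives a geometric series bounded by `θ / (1 - θ)`. -/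

lemma shift_iterate_apply {d : ℕ} (i : ℕ) (x : X d) (n : ℕ) : (shift^[i] x) n = x (n + i) := by
  induction i generalizing x with
  | zero => rfl
  | succ k ih => rw [Function.iterate_succ_apply, ih, shift, Nat.add_assoc]

lemma dtheta_le_pow_of_forall_lt_eq {d : ℕ} {θ : ℝ} (hθ0 : 0 ≤ θ) (hθ1 : θ ≤ 1) {x y : X d}
    {m : ℕ} (h : ∀ k < m, x k = y k) : dtheta θ x y ≤ θ ^ m := by
  rw [dtheta]
  split_ifs with hxy
  · positivity
  · exact pow_le_pow_of_le_one hθ0 hθ1 ((Nat.le_find_iff _ _).2 fun k hk hne => hne (h k hk))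

lemma LipWrt.abs_sub_le_pow {d : ℕ} {θ C : ℝ} {f : X d → ℝ} (hf : LipWrt θ C f)
    (hθ0 : 0 ≤ θ) (hθ1 : θ ≤ 1) (hC : 0 ≤ C) {x y : X d} {m : ℕ} (h : ∀ k < m, x k = y k) :
    |f x - f y| ≤ C * θ ^ m :=
  (hf x y).trans (mul_le_mul_of_nonneg_left (dtheta_le_pow_of_forall_lt_eq hθ0 hθ1 h) hC)

lemma apply_eq_apply_mod_of_forall_lt {d : ℕ} {p : X d} {N j : ℕ}
    (hagree : ∀ i < j, p (N + i) = p i) : ∀ m < N + j, p m = p (m % N) := by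
  rcases N.eq_zero_or_pos with rfl | hN
  · simp
  intro m
  induction m using Nat.strong_induction_on with
  | _ m ih =>
    intro hm
    rcases lt_or_ge m N with hmN | hmN
    · rw [Nat.mod_eq_of_lt hmN]
    · obtain ⟨i, rfl⟩ := Nat.exists_eq_add_of_le hmN
      rw [hagree i (by omega), ih i (by omega) (by omega), Nat.add_mod_left]

lemma sum_range_pow_sub_le {θ : ℝ} (hθ0 : 0 ≤ θ) (hθ1 : θ < 1) (N : ℕ) :
    ∑ i ∈ Finset.range N, θ ^ (N - i) ≤ θ / (1 - θ) := by
  have hreflect : ∑ i ∈ Finset.range N, θ ^ (N - i) = ∑ i ∈ Finset.Ico 1 (N + 1), θ ^ i := by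
    rw [Finset.sum_Ico_eq_sum_range, ← Finset.sum_range_reflect, Nat.add_sub_cancel]
    refine Finset.sum_congr rfl fun i hi => ?_
    rw [Finset.mem_range] at hi
    congr 1
    omega
  simpa [hreflect] using geom_sum_Ico_le_of_lt_one (m := 1) (n := N + 1) hθ0 hθ1

theorem stmt2_general (d : ℕ) (θ C : ℝ) (hθ0 : 0 < θ) (hθ1 : θ < 1) (hC : 0 ≤ C)
    (f : X d → ℝ) (hf : LipWrt θ C f) (p : X d) (N j : ℕ)
    (hagree : ∀ i < j, p (N + i) = p i) :
    |birkhoff f N p - birkhoff f N (fun i => p (i % N))| ≤ C * θ ^ j * (θ / (1 - θ)) := by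
  have hperiodic := apply_eq_apply_mod_of_forall_lt hagree
  have hterm : ∀ i ∈ Finset.range N,
      |f (shift^[i] p) - f (shift^[i] fun n => p (n % N))| ≤ C * θ ^ j * θ ^ (N - i) := by
    intro i hi
    rw [Finset.mem_range] at hi
    rw [mul_assoc, ← pow_add]
    refine hf.abs_sub_le_pow hθ0.le hθ1.le hC fun k hk => ?_
    rw [shift_iterate_apply, shift_iterate_apply]
    exact hperiodic (k + i) (by omega)
  calc |birkhoff f N p - birkhoff f N (fun i => p (i % N))|
      = |∑ i ∈ Finset.range N, (f (shift^[i] p) - f (shift^[i] fun n => p (n % N)))| := by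
        rw [birkhoff, birkhoff, Finset.sum_sub_distrib]
    _ ≤ ∑ i ∈ Finset.range N, C * θ ^ j * θ ^ (N - i) :=
        (Finset.abs_sum_le_sum_abs _ _).trans (Finset.sum_le_sum hterm)
    _ ≤ C * θ ^ j * (θ / (1 - θ)) := by
        rw [← Finset.mul_sum]
        exact mul_le_mul_of_nonneg_left (sum_range_pow_sub_le hθ0.le hθ1 N) (by positivity)

theorem stmt2 (d : ℕ) (hd : 0 < d) (θ C : ℝ) (hθ0 : 0 < θ) (hθ1 : θ < 1) (hC : 0 ≤ C)
    (f : X d → ℝ) (hf : LipWrt θ C f) (p : X d) (N j : ℕ) (hN : 0 < N)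
    (hagree : ∀ i < j, p (N + i) = p i) :
    |birkhoff f N p - birkhoff f N (fun i => p (i % N))| ≤ C * θ ^ j * (θ / (1 - θ)) :=
  stmt2_general d θ C hθ0 hθ1 hC f hf p N j hagree
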